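/- Let M = [[A, B],[Bᵀ, A]] be a 2n×2n real symmetric matrix with A symmetric. Then λ₁(M) + λ_{2n}(M) ≤ 2·λ₁(A), where λ₁ denotes the largest eigenvalue and λ_{2n} the smallest. -/

import Mathlib

open Matrix Polynomial

open scoped MatrixOrder

/-!
Let `x = (u, v)` be an eigenvector of `M = [[P, Q], [Qᵀ, R]]` for `λ₁(M)` and put `y = (u, -v)`,
so `|y| = |x|`. The off-diagonal blocks cancel in `xᵀMx + yᵀMy = 2 (uᵀPu + vᵀRv)`. Since
`xᵀMx = λ₁(M) |x|²`, `yᵀMy ≥ λ_min(M) |x|²` and `uᵀPu + vᵀRv ≤ c |x|²` for any `c` bounding the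
spectra of `P` and `R`, we get `λ₁(M) + λ_min(M) ≤ 2c`.
-/

namespace Matrix

variable {m n ι : Type*} [Fintype m] [Fintype n]

theorem sumElim_dotProduct_fromBlocks_mulVec_add_neg {α : Type*} [CommRing α]
    (P : Matrix m m α) (Q : Matrix m n α) (Q' : Matrix n m α) (R : Matrix n n α)
    (u : m → α) (v : n → α) :
    Sum.elim u v ⬝ᵥ fromBlocks P Q Q' R *ᵥ Sum.elim u v +
        Sum.elim u (-v) ⬝ᵥ fromBlocks P Q Q' R *ᵥ Sum.elim u (-v) =
      2 * (u ⬝ᵥ P *ᵥ u + v ⬝ᵥ R *ᵥ v) := by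
  simp only [fromBlocks_mulVec, sumElim_dotProduct_sumElim, Sum.elim_comp_inl, Sum.elim_comp_inr,
    mulVec_neg, dotProduct_add, dotProduct_neg, neg_dotProduct, neg_neg]
  ring

section Spectrum

variable [DecidableEq n]

theorem mem_spectrum_iff_of_charpoly_eq_prod {K : Type*} [Field K] [Fintype ι]
    {M : Matrix n n K} {μ : ι → K} (hμ : M.charpoly = ∏ i, (X - C (μ i))) {x : K} :
    x ∈ spectrum K M ↔ ∃ i, μ i = x := by
  rw [mem_spectrum_iff_isRoot_charpoly, hμ, isRoot_prod]
  simp only [root_X_sub_C, Finset.mem_univ, true_and]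

theorem exists_mulVec_eq_smul_of_mem_spectrum {K : Type*} [Field K] {M : Matrix n n K} {x : K}
    (hx : x ∈ spectrum K M) : ∃ v ≠ 0, M *ᵥ v = x • v := by
  rw [← spectrum_toLin', ← Module.End.hasEigenvalue_iff_mem_spectrum] at hx
  obtain ⟨v, hv⟩ := hx.exists_hasEigenvector
  exact ⟨v, hv.2, by simpa using hv.apply_eq_smul⟩

namespace IsHermitian

variable {M : Matrix n n ℝ} (hM : M.IsHermitian)
include hM

theorem dotProduct_mulVec_le {r : ℝ} (h : ∀ x ∈ spectrum ℝ M, x ≤ r) (z : n → ℝ) :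
    z ⬝ᵥ M *ᵥ z ≤ r * (z ⬝ᵥ z) := by
  have hle : M ≤ algebraMap ℝ (Matrix n n ℝ) r := le_algebraMap_of_spectrum_le h hM.isSelfAdjoint
  have := (le_iff.mp hle).dotProduct_mulVec_nonneg z
  rw [star_trivial, sub_mulVec, dotProduct_sub, Algebra.algebraMap_eq_smul_one, smul_mulVec,
    one_mulVec, dotProduct_smul, smul_eq_mul] at this
  linarith

theorem le_dotProduct_mulVec {r : ℝ} (h : ∀ x ∈ spectrum ℝ M, r ≤ x) (z : n → ℝ) :
    r * (z ⬝ᵥ z) ≤ z ⬝ᵥ M *ᵥ z := by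
  have hle : algebraMap ℝ (Matrix n n ℝ) r ≤ M := algebraMap_le_of_le_spectrum h hM.isSelfAdjoint
  have := (le_iff.mp hle).dotProduct_mulVec_nonneg z
  rw [star_trivial, sub_mulVec, dotProduct_sub, Algebra.algebraMap_eq_smul_one, smul_mulVec,
    one_mulVec, dotProduct_smul, smul_eq_mul] at this
  linarith

end IsHermitian

theorem fromBlocks_spectrum_add_le_two_mul [DecidableEq m]
    {P : Matrix m m ℝ} {Q : Matrix m n ℝ} {R : Matrix n n ℝ}
    (hP : P.IsHermitian) (hR : R.IsHermitian) {a b c : ℝ}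
    (ha : a ∈ spectrum ℝ (fromBlocks P Q Qᵀ R)) (hb : ∀ x ∈ spectrum ℝ (fromBlocks P Q Qᵀ R), b ≤ x)
    (hcP : ∀ x ∈ spectrum ℝ P, x ≤ c) (hcR : ∀ x ∈ spectrum ℝ R, x ≤ c) :
    a + b ≤ 2 * c := by
  have hM : (fromBlocks P Q Qᵀ R).IsHermitian :=
    hP.fromBlocks (conjTranspose_eq_transpose_of_trivial Q) hR
  obtain ⟨x, hx0, hx⟩ := exists_mulVec_eq_smul_of_mem_spectrum ha
  set u : m → ℝ := x ∘ Sum.inl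
  set v : n → ℝ := x ∘ Sum.inr
  have hxuv : x = Sum.elim u v := (Sum.elim_comp_inl_inr x).symm
  have hnorm : u ⬝ᵥ u + v ⬝ᵥ v = x ⬝ᵥ x := by rw [hxuv, sumElim_dotProduct_sumElim]
  have hnorm' : Sum.elim u (-v) ⬝ᵥ Sum.elim u (-v) = x ⬝ᵥ x := by
    rw [sumElim_dotProduct_sumElim, neg_dotProduct_neg, hnorm]
  have hpos : 0 < x ⬝ᵥ x := by simpa using dotProduct_self_star_pos_iff.mpr hx0
  have hyMy := hM.le_dotProduct_mulVec hb (Sum.elim u (-v))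
  rw [hnorm'] at hyMy
  have hu := hP.dotProduct_mulVec_le hcP u
  have hv := hR.dotProduct_mulVec_le hcR v
  refine le_of_mul_le_mul_right ?_ hpos
  calc (a + b) * (x ⬝ᵥ x)
      ≤ x ⬝ᵥ fromBlocks P Q Qᵀ R *ᵥ x +
          Sum.elim u (-v) ⬝ᵥ fromBlocks P Q Qᵀ R *ᵥ Sum.elim u (-v) := by
        rw [hx, dotProduct_smul, smul_eq_mul]; linarith
    _ = 2 * (u ⬝ᵥ P *ᵥ u + v ⬝ᵥ R *ᵥ v) := by
        rw [hxuv]; exact sumElim_dotProduct_fromBlocks_mulVec_add_neg P Q Qᵀ R u v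
    _ ≤ 2 * c * (x ⬝ᵥ x) := by rw [← hnorm]; linarith

end Spectrum

end Matrix

/-- Let `M = [[A, B], [Bᵀ, A]]` be a `2n × 2n` real symmetric block matrix with `A`
symmetric. Then `λ₁(M) + λ_{2n}(M) ≤ 2 λ₁(A)`, where `λ₁` denotes the largest and
`λ_{2n}` the smallest eigenvalue (eigenvalues listed in nonincreasing order). -/
theorem stmt15 {n : ℕ} (hn : 0 < n) (A B : Matrix (Fin n) (Fin n) ℝ)
    (hA : A.IsSymm)
    (μ : Fin (2 * n) → ℝ) (hμa : Antitone μ)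
    (hμ : (Matrix.fromBlocks A B Bᵀ A).charpoly = ∏ i, (X - C (μ i)))
    (ν : Fin n → ℝ) (hνa : Antitone ν)
    (hν : A.charpoly = ∏ i, (X - C (ν i))) :
    μ ⟨0, by omega⟩ + μ ⟨2 * n - 1, by omega⟩ ≤ 2 * ν ⟨0, hn⟩ := by
  have hAH : A.IsHermitian := by rwa [IsHermitian, conjTranspose_eq_transpose_of_trivial]
  have hμ_last : ∀ x ∈ spectrum ℝ (fromBlocks A B Bᵀ A), μ ⟨2 * n - 1, by omega⟩ ≤ x := by
    rintro _ hx
    obtain ⟨i, rfl⟩ := (mem_spectrum_iff_of_charpoly_eq_prod hμ).mp hx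
    exact hμa (Fin.le_iff_val_le_val.mpr (Nat.le_sub_one_of_lt i.2))
  have hν_zero : ∀ x ∈ spectrum ℝ A, x ≤ ν ⟨0, hn⟩ := by
    rintro _ hx
    obtain ⟨i, rfl⟩ := (mem_spectrum_iff_of_charpoly_eq_prod hν).mp hx
    exact hνa (Fin.le_iff_val_le_val.mpr (Nat.zero_le _))
  exact fromBlocks_spectrum_add_le_two_mul hAH hAH
    ((mem_spectrum_iff_of_charpoly_eq_prod hμ).mpr ⟨_, rfl⟩) hμ_last hν_zero hν_zero
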